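/- In any algebra (S,*,') satisfying the three axioms, the identity x''' * x'' = x''' * x'''' holds for all x in S. -/

import Mathlib

section

variable {S : Type*} {m : S → S → S} {i : S → S}

theorem mul_mul_inv_mul_inv_inv_eq_self (E1 : ∀ x, m (m x (i x)) x = x)
    (E3 : ∀ x y z, m (m x y) z = m x (m y (i (i z)))) (y : S) :
    m y (m (i y) (i (i y))) = y :=
  (E3 y (i y) y).symm.trans (E1 y)

theorem inv_mul_self_eq_inv_mul_inv_inv (E1 : ∀ x, m (m x (i x)) x = x)
    (E3 : ∀ x y z, m (m x y) z = m x (m y (i (i z)))) (y : S) :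
    m (i y) y = m (i y) (i (i y)) := by
  -- With a = y', both sides equal (a (a' a'')) y: reassociating by E3 turns the
  -- right factor into (a' a'') a' = a'.
  calc m (i y) y = m (m (i y) (m (i (i y)) (i (i (i y))))) y := by
        rw [mul_mul_inv_mul_inv_inv_eq_self E1 E3]
    _ = m (i y) (i (i y)) := by rw [E3, E1]

end

theorem stmt_general (S : Type*) (m : S → S → S) (i : S → S)
    (E1 : ∀ x, m (m x (i x)) x = x)
    (E3 : ∀ x y z, m (m x y) z = m x (m y (i (i z)))) :
    ∀ x, m (i (i (i x))) (i (i x)) = m (i (i (i x))) (i (i (i (i x)))) :=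
  fun x => inv_mul_self_eq_inv_mul_inv_inv E1 E3 (i (i x))

theorem stmt (S : Type*) (m : S → S → S) (i : S → S)
    (E1 : ∀ x, m (m x (i x)) x = x)
    (E2 : ∀ x y, m (m x (i x)) (m (i y) y) = m (m (i y) y) (m x (i x)))
    (E3 : ∀ x y z, m (m x y) z = m x (m y (i (i z)))) :
    ∀ x, m (i (i (i x))) (i (i x)) = m (i (i (i x))) (i (i (i (i x)))) :=
  stmt_general S m i E1 E3
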